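/- There exists an integer N₀ such that for every integer N ≥ N₀ there exists a real number x with N^{−2.9} ≤ x < π/2 that is (N, N−3)-good. -/

import Mathlib

open Real Finset

/-- I_s = [(π−s)/2, (π+s)/2]. -/
noncomputable def Iset (s : ℝ) : Set ℝ := Set.Icc ((Real.pi - s) / 2) ((Real.pi + s) / 2)

/-- F(x₁,…,x_{2r}) = Σ_{m=1}^{r} cos(a_m)cos(b_m)·∏_{ℓ=1}^{m−1} sin(a_ℓ)sin(b_ℓ),
where a_m = x_{2m−1}, b_m = x_{2m}. -/
noncomputable def Fangle (a b : ℕ → ℝ) (r : ℕ) : ℝ :=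
  ∑ m ∈ Finset.Icc 1 r, Real.cos (a m) * Real.cos (b m) *
    ∏ l ∈ Finset.Icc 1 (m - 1), (Real.sin (a l) * Real.sin (b l))

/-- X(x₁,…,x_{2r}) = ∏_{m=1}^{r} sin(a_m)sin(b_m). -/
noncomputable def Xangle (a b : ℕ → ℝ) (r : ℕ) : ℝ :=
  ∏ m ∈ Finset.Icc 1 r, (Real.sin (a m) * Real.sin (b m))

/-- E(m,s) = m·sin²(s/2) − cos(s/2)^{2m} + sin(s/2). -/
noncomputable def Efun (m : ℕ) (s : ℝ) : ℝ :=
  (m : ℝ) * Real.sin (s / 2) ^ 2 - Real.cos (s / 2) ^ (2 * m) + Real.sin (s / 2)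

/-- G(N,j,x,s) = (N−j−2)·sin²(s/2) − sin(x/2)·cos(s/2)^{2(N−j−2)} + sin(s/2). -/
noncomputable def Gfun (N j : ℕ) (x s : ℝ) : ℝ :=
  ((N - j - 2 : ℕ) : ℝ) * Real.sin (s / 2) ^ 2
    - Real.sin (x / 2) * Real.cos (s / 2) ^ (2 * (N - j - 2)) + Real.sin (s / 2)

/-- The sequence s_N^{(j)}: s_N^{(0)} = inf{s > 0 : E(N−2,s) = 0},
s_N^{(j)} = inf{s > 0 : G(N,j,s_N^{(j−1)},s) = 0}. -/
noncomputable def sSeq (N : ℕ) : ℕ → ℝ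
  | 0 => sInf {s : ℝ | 0 < s ∧ Efun (N - 2) s = 0}
  | j + 1 => sInf {s : ℝ | 0 < s ∧ Gfun N (j + 1) (sSeq N j) s = 0}

/-- s is N-good: for all x₁,…,x_{2(N−2)} ∈ I_s,
I_s ⊆ α_{N−1,N}({x₁}×⋯×{x_{2(N−2)}}×(0,π)). -/
def NGood (N : ℕ) (s : ℝ) : Prop :=
  ∀ a b : ℕ → ℝ, (∀ m ∈ Finset.Icc 1 (N - 2), a m ∈ Iset s ∧ b m ∈ Iset s) →
    ∀ y ∈ Iset s, ∃ φ ∈ Set.Ioo (0 : ℝ) Real.pi,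
      Real.arccos (Fangle a b (N - 2) + Real.cos φ * Xangle a b (N - 2)) = y

/-- s is (N,j)-good: for all x₁,…,x_{2(N−j−2)} ∈ I_s,
I_s ⊆ α_{N−j−1,N−j}({x₁}×⋯×{x_{2(N−j−2)}}×I_{s_N^{(j−1)}}). -/
def NjGood (N j : ℕ) (s : ℝ) : Prop :=
  ∀ a b : ℕ → ℝ, (∀ m ∈ Finset.Icc 1 (N - j - 2), a m ∈ Iset s ∧ b m ∈ Iset s) →
    ∀ y ∈ Iset s, ∃ φ ∈ Iset (sSeq N (j - 1)),
      Real.arccos (Fangle a b (N - j - 2) + Real.cos φ * Xangle a b (N - j - 2)) = y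

/-!
Write `u_j = sin (s_N^{(j)} / 2)` and `m = N - j - 2`. On `[0, π]` the function `G(N, j, x, ·)`
equals `-sin (x/2)` at `0`, is positive at `π`, and, by Bernoulli's inequality
`cos (s/2)^(2m) ≥ 1 - m sin² (s/2)`, stays negative while `sin (s/2) + 2m sin² (s/2) < sin (x/2)`.
Hence its first positive zero satisfies `u_j ≥ 1 / (1 + 2N(j+1))`, by induction on `j`
(`E(N-2, ·)` is `G(N, 0, π, ·)`).

For `j = N - 3` only one pair `(x₁, x₂)` is involved: `α_{2,3} = arccos (F + cos φ · X)` with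
`|F| ≤ sin² (x/2)` and `X ≥ cos² (x/2)`. As `φ` runs over `I_t`, `t = s_N^{(N-4)}`, the value
`F + cos φ · X` sweeps `[F - sin (t/2) X, F + sin (t/2) X]`, which contains every `cos y` with
`y ∈ I_x` as soon as `5x ≤ sin (t/2)`. The choice `x = 1/(10N²)` works, and
`N^(-2.9) ≤ 1/(10N²)` for `N ≥ 100`.
-/

lemma sInf_pos_zeros_mem_Icc {f : ℝ → ℝ} {δ b : ℝ} (hb : 0 ≤ b) (hf : ContinuousOn f (Set.Icc 0 b))
    (h0 : f 0 < 0) (hfb : 0 < f b) (hne : ∀ s ∈ Set.Ioo 0 δ, f s ≠ 0) :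
    sInf {s | 0 < s ∧ f s = 0} ∈ Set.Icc δ b := by
  obtain ⟨c, hc, hfc⟩ := intermediate_value_Icc hb hf ⟨h0.le, hfb.le⟩
  have hc0 : 0 < c := hc.1.lt_of_ne (by rintro rfl; exact h0.ne hfc)
  refine ⟨le_csInf ⟨c, hc0, hfc⟩ fun s hs => ?_,
    csInf_le_of_le ⟨0, fun s hs => hs.1.le⟩ ⟨hc0, hfc⟩ hc.2⟩
  by_contra! hsδ
  exact hne s ⟨hs.1, hsδ⟩ hs.2

lemma add_mul_sq_lt_mul_one_sub_sq_pow (m : ℕ) {u v : ℝ} (hu0 : 0 ≤ u) (hu1 : u ≤ 1) (hv1 : v ≤ 1)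
    (h : u + 2 * m * u ^ 2 < v) : m * u ^ 2 + u < v * (1 - u ^ 2) ^ m := by
  have hv0 : 0 < v := by nlinarith
  have bernoulli : 1 - m * u ^ 2 ≤ (1 - u ^ 2) ^ m := by
    simpa [sub_eq_add_neg, mul_neg] using one_add_mul_le_pow (a := -u ^ 2) (by nlinarith) m
  have hmu : 0 ≤ (m : ℝ) * u ^ 2 := by positivity
  calc (m : ℝ) * u ^ 2 + u < v - v * (m * u ^ 2) := by nlinarith
    _ = v * (1 - m * u ^ 2) := by ring
    _ ≤ v * (1 - u ^ 2) ^ m := by gcongr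

lemma one_div_add_two_mul_sq_le {R n : ℝ} (hR : 0 < R) (hn : 0 ≤ n) :
    1 / (R + 2 * n) + 2 * n * (1 / (R + 2 * n)) ^ 2 ≤ 1 / R := by
  have hRn : 0 < R + 2 * n := by positivity
  calc 1 / (R + 2 * n) + 2 * n * (1 / (R + 2 * n)) ^ 2 = (R + 4 * n) / (R + 2 * n) ^ 2 := by
        field_simp; ring
    _ ≤ 1 / R := by rw [div_le_div_iff₀ (by positivity) hR]; nlinarith [sq_nonneg n]

lemma abs_cos_le_sin_half_of_mem_Iset {x θ : ℝ} (hx : x ≤ π) (hθ : θ ∈ Iset x) :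
    |cos θ| ≤ sin (x / 2) := by
  obtain ⟨h1, h2⟩ := hθ
  have e1 : cos ((π - x) / 2) = sin (x / 2) := by
    rw [show (π - x) / 2 = π / 2 - x / 2 by ring, cos_pi_div_two_sub]
  have e2 : cos ((π + x) / 2) = -sin (x / 2) := by
    rw [show (π + x) / 2 = π / 2 - -(x / 2) by ring, cos_pi_div_two_sub, sin_neg]
  refine abs_le.2 ⟨?_, ?_⟩
  · rw [← e2]; exact cos_le_cos_of_nonneg_of_le_pi (by linarith) (by linarith) h2
  · rw [← e1]; exact cos_le_cos_of_nonneg_of_le_pi (by linarith) (by linarith) h1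

lemma cos_half_le_sin_of_mem_Iset {x θ : ℝ} (hx : x ≤ 2 * π) (hθ : θ ∈ Iset x) :
    cos (x / 2) ≤ sin θ := by
  obtain ⟨h1, h2⟩ := hθ
  rw [← cos_pi_div_two_sub, ← cos_abs (π / 2 - θ)]
  exact cos_le_cos_of_nonneg_of_le_pi (abs_nonneg _) (by linarith)
    (abs_le.2 ⟨by linarith, by linarith⟩)

lemma exists_mem_Iset_add_cos_mul_eq {t F X c : ℝ} (ht : 0 ≤ t)
    (hc : |c - F| ≤ sin (t / 2) * X) : ∃ φ ∈ Iset t, F + cos φ * X = c := by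
  have hleft : cos ((π - t) / 2) = sin (t / 2) := by
    rw [show (π - t) / 2 = π / 2 - t / 2 by ring, cos_pi_div_two_sub]
  have hright : cos ((π + t) / 2) = -sin (t / 2) := by
    rw [show (π + t) / 2 = π / 2 - -(t / 2) by ring, cos_pi_div_two_sub, sin_neg]
  have hcont : ContinuousOn (fun φ => F + cos φ * X) (Iset t) := by fun_prop
  obtain ⟨h1, h2⟩ := abs_le.1 hc
  exact intermediate_value_Icc' (by linarith) hcont
    ⟨by rw [hright]; linarith, by rw [hleft]; linarith⟩

lemma exists_mem_Iset_arccos_eq {x t α β y : ℝ} (hx : x ≤ π) (ht : t ∈ Set.Icc 0 π)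
    (hxt : sin (x / 2) * (1 + sin (x / 2)) ≤ sin (t / 2) * cos (x / 2) ^ 2)
    (hα : α ∈ Iset x) (hβ : β ∈ Iset x) (hy : y ∈ Iset x) :
    ∃ φ ∈ Iset t, arccos (cos α * cos β + cos φ * (sin α * sin β)) = y := by
  have hx0 : 0 ≤ x := by linarith [hy.1, hy.2]
  have hc0 : 0 ≤ cos (x / 2) := cos_nonneg_of_mem_Icc ⟨by linarith [pi_pos], by linarith⟩
  have hs0 : 0 ≤ sin (x / 2) := sin_nonneg_of_nonneg_of_le_pi (by linarith) (by linarith)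
  have hu0 : 0 ≤ sin (t / 2) :=
    sin_nonneg_of_nonneg_of_le_pi (by linarith [ht.1]) (by linarith [ht.2])
  have hsinα := cos_half_le_sin_of_mem_Iset (by linarith [pi_pos]) hα
  have hX : cos (x / 2) ^ 2 ≤ sin α * sin β := by
    rw [sq]
    exact mul_le_mul hsinα (cos_half_le_sin_of_mem_Iset (by linarith [pi_pos]) hβ) hc0
      (hc0.trans hsinα)
  have hF : |cos α * cos β| ≤ sin (x / 2) ^ 2 := by
    rw [abs_mul, sq]
    exact mul_le_mul (abs_cos_le_sin_half_of_mem_Iset hx hα) (abs_cos_le_sin_half_of_mem_Iset hx hβ)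
      (abs_nonneg _) hs0
  have hdist : |cos y - cos α * cos β| ≤ sin (t / 2) * (sin α * sin β) :=
    calc |cos y - cos α * cos β| ≤ |cos y| + |cos α * cos β| := abs_sub _ _
      _ ≤ sin (x / 2) + sin (x / 2) ^ 2 := add_le_add (abs_cos_le_sin_half_of_mem_Iset hx hy) hF
      _ = sin (x / 2) * (1 + sin (x / 2)) := by ring
      _ ≤ sin (t / 2) * cos (x / 2) ^ 2 := hxt
      _ ≤ sin (t / 2) * (sin α * sin β) := mul_le_mul_of_nonneg_left hX hu0
  obtain ⟨φ, hφ, hcos⟩ := exists_mem_Iset_add_cos_mul_eq ht.1 hdist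
  exact ⟨φ, hφ, hcos ▸ arccos_cos (by linarith [hy.1]) (by linarith [hy.2])⟩

lemma sin_half_mul_one_add_le {x u : ℝ} (hx : 0 ≤ x) (hxu : 5 * x ≤ u) (hu : u ≤ 1) :
    sin (x / 2) * (1 + sin (x / 2)) ≤ u * cos (x / 2) ^ 2 := by
  have hs : sin (x / 2) ≤ x / 2 := sin_le (by linarith)
  have hs0 : 0 ≤ sin (x / 2) :=
    sin_nonneg_of_nonneg_of_le_pi (by linarith) (by linarith [pi_gt_three])
  rw [cos_sq']
  nlinarith [mul_nonneg hs0 hs0]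

lemma rpow_neg_le_one_div_ten_mul_sq {n : ℝ} (hn : 100 ≤ n) :
    n ^ (-(2.9 : ℝ)) ≤ 1 / (10 * n ^ 2) := by
  have hn0 : 0 < n := by linarith
  have hsqrt : 10 ≤ n ^ (1 / 2 : ℝ) := by
    rw [← sqrt_eq_rpow, le_sqrt (by norm_num) hn0.le]; linarith
  have key : 10 * n ^ 2 ≤ n ^ (2.9 : ℝ) :=
    calc 10 * n ^ 2 ≤ n ^ (1 / 2 : ℝ) * n ^ (2 : ℝ) := by rw [rpow_two]; gcongr
      _ ≤ n ^ (0.9 : ℝ) * n ^ (2 : ℝ) := by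
          gcongr
          · linarith
          · norm_num
      _ = n ^ (2.9 : ℝ) := by rw [← rpow_add hn0]; norm_num
  rw [rpow_neg hn0.le, one_div]
  exact inv_anti₀ (by positivity) key

lemma Gfun_neg_of_sin_half_lt {N j : ℕ} {x s w : ℝ}
    (hw : w + 2 * (N - j - 2 : ℕ) * w ^ 2 ≤ sin (x / 2))
    (hs : s ∈ Set.Icc 0 π) (hsw : sin (s / 2) < w) : Gfun N j x s < 0 := by
  set u := sin (s / 2)
  have hu0 : 0 ≤ u :=
    sin_nonneg_of_nonneg_of_le_pi (by linarith [hs.1]) (by linarith [hs.2, pi_pos])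
  have hm : (0 : ℝ) ≤ (N - j - 2 : ℕ) := Nat.cast_nonneg _
  have key := add_mul_sq_lt_mul_one_sub_sq_pow (N - j - 2) hu0 (sin_le_one _) (sin_le_one (x / 2))
    (by nlinarith [mul_nonneg hm (mul_nonneg (sub_nonneg.2 hsw.le) (by linarith : (0:ℝ) ≤ w + u))])
  rw [Gfun, pow_mul, cos_sq']
  linarith

lemma sInf_zeros_Gfun_mem_Icc_and_le_sin {N j : ℕ} {x w : ℝ} (hj : j + 3 ≤ N) (hw0 : 0 < w)
    (hw : w + 2 * (N - j - 2 : ℕ) * w ^ 2 ≤ sin (x / 2)) :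
    sInf {s | 0 < s ∧ Gfun N j x s = 0} ∈ Set.Icc 0 π ∧
      w ≤ sin (sInf {s | 0 < s ∧ Gfun N j x s = 0} / 2) := by
  have hm : (0 : ℝ) ≤ 2 * (N - j - 2 : ℕ) * w ^ 2 := by positivity
  have hw1 : w ≤ 1 := by linarith [sin_le_one (x / 2)]
  have h0 : Gfun N j x 0 < 0 := by simp [Gfun]; linarith
  have hπ : 0 < Gfun N j x π := by
    simp [Gfun, cos_pi_div_two, zero_pow (show 2 * (N - j - 2) ≠ 0 by omega)]
    positivity
  have hne : ∀ s ∈ Set.Ioo 0 (2 * arcsin w), Gfun N j x s ≠ 0 := by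
    rintro s ⟨hs0, hsw⟩
    have := arcsin_le_pi_div_two w
    refine (Gfun_neg_of_sin_half_lt hw ⟨hs0.le, by linarith⟩ ?_).ne
    exact (lt_arcsin_iff_sin_lt' ⟨by linarith, by linarith⟩).1 (by linarith)
  have hS := sInf_pos_zeros_mem_Icc pi_pos.le (by unfold Gfun; fun_prop) h0 hπ hne
  have harcsin := arcsin_pos.2 hw0
  refine ⟨⟨by linarith [hS.1], hS.2⟩, ?_⟩
  exact (arcsin_le_iff_le_sin ⟨by linarith, hw1⟩ ⟨by linarith [hS.1, pi_pos], by linarith [hS.2]⟩).1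
    (by linarith [hS.1])

lemma sInf_zeros_Gfun_mem_Icc_and_one_div_le_sin {N j : ℕ} {x R : ℝ} (hj : j + 3 ≤ N) (hR : 0 < R)
    (hx : 1 / R ≤ sin (x / 2)) :
    sInf {s | 0 < s ∧ Gfun N j x s = 0} ∈ Set.Icc 0 π ∧
      1 / (R + 2 * N) ≤ sin (sInf {s | 0 < s ∧ Gfun N j x s = 0} / 2) := by
  refine sInf_zeros_Gfun_mem_Icc_and_le_sin hj (by positivity) ?_
  calc 1 / (R + 2 * N) + 2 * (N - j - 2 : ℕ) * (1 / (R + 2 * N)) ^ 2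
      ≤ 1 / (R + 2 * N) + 2 * N * (1 / (R + 2 * N)) ^ 2 := by
        gcongr; exact_mod_cast (show N - j - 2 ≤ N by omega)
    _ ≤ 1 / R := one_div_add_two_mul_sq_le hR N.cast_nonneg
    _ ≤ sin (x / 2) := hx

lemma sSeq_zero_eq (N : ℕ) : sSeq N 0 = sInf {s | 0 < s ∧ Gfun N 0 π s = 0} := by
  simp [sSeq, Gfun, Efun]

theorem sSeq_mem_Icc_and_one_div_le_sin {N : ℕ} :
    ∀ j, j + 3 ≤ N → sSeq N j ∈ Set.Icc 0 π ∧ 1 / (1 + 2 * N * (j + 1)) ≤ sin (sSeq N j / 2)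
  | 0, hj => by
    rw [sSeq_zero_eq]
    simpa using sInf_zeros_Gfun_mem_Icc_and_one_div_le_sin hj one_pos (by simp)
  | j + 1, hj => by
    have ih := sSeq_mem_Icc_and_one_div_le_sin (N := N) j (by omega)
    obtain ⟨hmem, hsin⟩ := sInf_zeros_Gfun_mem_Icc_and_one_div_le_sin hj (by positivity) ih.2
    refine ⟨hmem, ?_⟩
    rwa [show (1 : ℝ) + 2 * N * ((j + 1 : ℕ) + 1) = 1 + 2 * N * (j + 1) + 2 * N by push_cast; ring]

lemma NjGood_sub_three_of {N : ℕ} {x : ℝ} (hN : 3 ≤ N)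
    (h : ∀ α ∈ Iset x, ∀ β ∈ Iset x, ∀ y ∈ Iset x,
      ∃ φ ∈ Iset (sSeq N (N - 4)), arccos (cos α * cos β + cos φ * (sin α * sin β)) = y) :
    NjGood N (N - 3) x := by
  intro a b hab y hy
  rw [show N - (N - 3) - 2 = 1 by omega]
  have hab1 := hab 1 (by simp; omega)
  obtain ⟨φ, hφ, hφy⟩ := h _ hab1.1 _ hab1.2 y hy
  exact ⟨φ, hφ, by simpa [Fangle, Xangle] using hφy⟩

/-- for N large there is an (N,N−3)-good number x ≥ N^{−2.9}
(and x < π/2). -/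
theorem exists_NjGood_ge_rpow :
    ∃ N₀ : ℕ, ∀ N : ℕ, N₀ ≤ N →
      ∃ x : ℝ, (N : ℝ) ^ (-(2.9 : ℝ)) ≤ x ∧ x < Real.pi / 2 ∧ NjGood N (N - 3) x := by
  refine ⟨100, fun N hN => ?_⟩
  have hN' : (100 : ℝ) ≤ N := by exact_mod_cast hN
  obtain ⟨ht, hsin⟩ := sSeq_mem_Icc_and_one_div_le_sin (N := N) (N - 4) (by omega)
  have hj : ((N - 4 : ℕ) : ℝ) + 1 ≤ N - 1 := by
    rw [Nat.cast_sub (by omega)]; push_cast; linarith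
  have hx : 5 * (1 / (10 * (N : ℝ) ^ 2)) ≤ sin (sSeq N (N - 4) / 2) :=
    calc 5 * (1 / (10 * (N : ℝ) ^ 2)) = 1 / (2 * N ^ 2) := by ring
      _ ≤ 1 / (1 + 2 * N * (((N - 4 : ℕ) : ℝ) + 1)) := by gcongr; nlinarith
      _ ≤ sin (sSeq N (N - 4) / 2) := hsin
  have hxπ : 1 / (10 * (N : ℝ) ^ 2) ≤ 1 := by rw [div_le_one (by positivity)]; nlinarith
  refine ⟨1 / (10 * (N : ℝ) ^ 2), rpow_neg_le_one_div_ten_mul_sq hN', by linarith [pi_gt_three],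
    NjGood_sub_three_of (by omega) fun α hα β hβ y hy => ?_⟩
  exact exists_mem_Iset_arccos_eq (by linarith [pi_gt_three]) ht
    (sin_half_mul_one_add_le (by positivity) hx (sin_le_one _)) hα hβ hy
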